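/- For the concatenated quantum Hamming code using the [[N_l, K_l, 3]] quantum Hamming code with N_l = 2^{l+2} - 1 and K_l = N_l - 2(l+2) at each level l, the total number of physical qubits N^{(L)} = ∏_{l=1}^{L} N_l and logical qubits K^{(L)} = ∏_{l=1}^{L} K_l satisfy that the overhead ratio N^{(L)} / K^{(L)} is bounded above by a constant independent of L. -/

import Mathlib

/-!
Write `N_l / K_l = 1 + ε_l` with `ε_l = 2(l+2) / K_l`. Since `K_l ≥ 2^(l-1)`, the excesses
`ε_l = O(l / 2^l)` are summable, and `1 + ε ≤ exp ε` bounds every partial product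
`N^(L) / K^(L) = ∏ (1 + ε_l)` by `exp (∑ ε_l)`.
-/

open Finset

theorem Real.prod_one_add_le_exp_tsum {ι : Type*} (s : Finset ι) {f : ι → ℝ}
    (hf : ∀ i, 0 ≤ f i) (hfs : Summable f) : ∏ i ∈ s, (1 + f i) ≤ Real.exp (∑' i, f i) :=
  (Real.prod_one_add_le_exp_sum s hf).trans <|
    Real.exp_le_exp.mpr (hfs.sum_le_tsum s fun i _ ↦ hf i)

def hammingLength (l : ℕ) : ℕ := 2 ^ (l + 2) - 1

def hammingDim (l : ℕ) : ℕ := 2 ^ (l + 2) - 2 * (l + 2) - 1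

theorem two_pow_le_two_mul_hammingDim {l : ℕ} (hl : 1 ≤ l) : 2 ^ l ≤ 2 * hammingDim l := by
  have : l < 2 ^ l := Nat.lt_two_pow_self
  have : 2 ^ (l + 2) = 4 * 2 ^ l := by ring
  unfold hammingDim
  omega

theorem hammingLength_eq_hammingDim_add {l : ℕ} (hl : 1 ≤ l) :
    hammingLength l = hammingDim l + 2 * (l + 2) := by
  have hK := two_pow_le_two_mul_hammingDim hl
  have : 2 ^ (l + 2) = 4 * 2 ^ l := by ring
  have : l < 2 ^ l := Nat.lt_two_pow_self
  unfold hammingLength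
  unfold hammingDim at hK ⊢
  omega

noncomputable def hammingExcess (l : ℕ) : ℝ := 2 * (l + 2) / hammingDim l

theorem hammingExcess_nonneg (l : ℕ) : 0 ≤ hammingExcess l := by
  unfold hammingExcess
  positivity

theorem hammingLength_div_hammingDim {l : ℕ} (hl : 1 ≤ l) :
    (hammingLength l : ℝ) / hammingDim l = 1 + hammingExcess l := by
  have hK : (0 : ℝ) < hammingDim l := by
    have := two_pow_le_two_mul_hammingDim hl
    have : 0 < 2 ^ l := Nat.two_pow_pos l
    exact_mod_cast (show 0 < hammingDim l by omega)
  rw [hammingExcess, hammingLength_eq_hammingDim_add hl]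
  field_simp
  push_cast
  ring

theorem hammingExcess_le (l : ℕ) : hammingExcess l ≤ 12 * ((l : ℝ) ^ 1 * (1 / 2) ^ l) := by
  rcases Nat.eq_zero_or_pos l with rfl | hl
  · simp [hammingExcess, hammingDim]
  have hK : (2 : ℝ) ^ l ≤ 2 * hammingDim l := by
    exact_mod_cast two_pow_le_two_mul_hammingDim hl
  have hl' : (1 : ℝ) ≤ l := by exact_mod_cast hl
  have h2 : (0 : ℝ) < 2 ^ l := by positivity
  rw [hammingExcess, div_le_iff₀ (by linarith), one_div, inv_pow]
  calc (2 : ℝ) * (l + 2) ≤ 6 * l := by linarith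
    _ = 12 * (l ^ 1 * (2 ^ l)⁻¹) * (2 ^ l / 2) := by field_simp; ring
    _ ≤ 12 * (l ^ 1 * (2 ^ l)⁻¹) * hammingDim l := by gcongr; linarith

theorem summable_hammingExcess : Summable hammingExcess := by
  have hr : ‖(1 / 2 : ℝ)‖ < 1 := by norm_num
  exact .of_nonneg_of_le hammingExcess_nonneg hammingExcess_le
    ((summable_pow_mul_geometric_of_norm_lt_one 1 hr).mul_left 12)

/-- Constant space overhead of the concatenated quantum Hamming code:
with `N_l = 2^(l+2) - 1` and `K_l = 2^(l+2) - 2(l+2) - 1`, the overhead ratio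
`N^(L)/K^(L) = (∏_{l=1}^L N_l)/(∏_{l=1}^L K_l)` is bounded by a constant independent of `L`. -/
theorem concatenated_hamming_constant_overhead :
    ∃ C : ℝ, ∀ L : ℕ,
      ((∏ l ∈ Finset.Icc 1 L, (2 ^ (l + 2) - 1 : ℕ) : ℕ) : ℝ) /
        ((∏ l ∈ Finset.Icc 1 L, (2 ^ (l + 2) - 2 * (l + 2) - 1 : ℕ) : ℕ) : ℝ) ≤ C := by
  refine ⟨Real.exp (∑' l, hammingExcess l), fun L ↦ ?_⟩
  change ((∏ l ∈ Icc 1 L, hammingLength l : ℕ) : ℝ) / ((∏ l ∈ Icc 1 L, hammingDim l : ℕ) : ℝ) ≤ _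
  rw [Nat.cast_prod, Nat.cast_prod, ← prod_div_distrib,
    prod_congr rfl fun l hl ↦ hammingLength_div_hammingDim (mem_Icc.mp hl).1]
  exact Real.prod_one_add_le_exp_tsum _ hammingExcess_nonneg summable_hammingExcess
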